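/- Differentiability of the Expected Moreau Envelope: Under assumption (A), L(α, τ) is finite for every (α, τ) ∈ ℝ × (0,∞), the function L is differentiable on ℝ × (0,∞), and differentiation may be exchanged with expectation: ∂L/∂α (α, τ) = E[ (αG + Z − prox_ℓ(αG + Z; τ)) · G / τ ] and ∂L/∂τ (α, τ) = − E[ (αG + Z − prox_ℓ(αG + Z; τ))² ] / (2τ²). -/

import Mathlib

open MeasureTheory ProbabilityTheory Set

/-- The subdifferential of `ℓ : ℝ → ℝ` at `x`. -/
def subdiff (ℓ : ℝ → ℝ) (x : ℝ) : Set ℝ := {s : ℝ | ∀ y : ℝ, ℓ x + s * (y - x) ≤ ℓ y}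

/-- `ℓ'₊(v) = max_{s∈∂ℓ(v)} |s|`. -/
noncomputable def maxAbsSubgrad (ℓ : ℝ → ℝ) (v : ℝ) : ℝ := sSup (abs '' subdiff ℓ v)

section Aux

open Real

variable {ℓ : ℝ → ℝ} {P : ℝ → ℝ → ℝ}


lemma gauss_sq_integrable : Integrable (fun x : ℝ => x ^ 2) (gaussianReal 0 1) := by
  rw [gaussianReal_of_var_ne_zero 0 one_ne_zero]
  rw [integrable_withDensity_iff (measurable_gaussianPDF 0 1)
    (Filter.Eventually.of_forall fun x => ENNReal.ofReal_lt_top)]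
  have h : ∀ x : ℝ, x ^ 2 * ((gaussianPDF 0 1 x).toReal)
      = (√(2 * π * 1))⁻¹ * (x ^ (2:ℝ) * rexp (-(1/2) * x ^ 2)) := by
    intro x
    rw [gaussianPDF, ENNReal.toReal_ofReal (gaussianPDFReal_nonneg 0 1 x), gaussianPDFReal,
      Real.rpow_two]
    push_cast
    ring_nf
  simp only [h]
  exact (integrable_rpow_mul_exp_neg_mul_sq (by norm_num) (by norm_num)).const_mul _





/-- existence of a subgradient for a convex function on ℝ -/
lemma subdiff_nonempty (hℓ : ConvexOn ℝ Set.univ ℓ) (x : ℝ) : (subdiff ℓ x).Nonempty := by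
  have hslope : ∀ y z : ℝ, y < x → x < z → (ℓ x - ℓ y) / (x - y) ≤ (ℓ z - ℓ x) / (z - x) :=
    fun y z hy hz => hℓ.slope_mono_adjacent (mem_univ y) (mem_univ z) hy hz
  set s := sInf ((fun z => (ℓ z - ℓ x) / (z - x)) '' Ioi x) with hs
  have hne : ((fun z => (ℓ z - ℓ x) / (z - x)) '' Ioi x).Nonempty :=
    ⟨_, mem_image_of_mem _ (by norm_num : x + 1 ∈ Ioi x)⟩
  have hbdd : BddBelow ((fun z => (ℓ z - ℓ x) / (z - x)) '' Ioi x) := by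
    refine ⟨(ℓ x - ℓ (x - 1)) / (x - (x - 1)), ?_⟩
    rintro t ⟨z, hz, rfl⟩
    exact hslope (x - 1) z (by linarith) hz
  refine ⟨s, fun y => ?_⟩
  rcases lt_trichotomy y x with hy | rfl | hy
  · -- y < x : slope x y ≤ s, and y - x < 0
    have h1 : (ℓ x - ℓ y) / (x - y) ≤ s := by
      apply le_csInf hne
      rintro t ⟨z, hz, rfl⟩
      exact hslope y z hy hz
    have hxy : 0 < x - y := by linarith
    -- ℓ x + s * (y - x) ≤ ℓ x + slope * (y-x) = ℓ y
    have := mul_le_mul_of_nonpos_right h1 (by linarith : y - x ≤ 0)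
    have heq : (ℓ x - ℓ y) / (x - y) * (y - x) = ℓ y - ℓ x := by
      field_simp
      ring
    nlinarith
  · simp
  · have h1 : s ≤ (ℓ y - ℓ x) / (y - x) := csInf_le hbdd (mem_image_of_mem _ hy)
    have hxy : 0 < y - x := by linarith
    have := mul_le_mul_of_nonneg_right h1 (le_of_lt hxy)
    have heq : (ℓ y - ℓ x) / (y - x) * (y - x) = ℓ y - ℓ x := by field_simp
    nlinarith

lemma abs_le_maxAbs {s x : ℝ} (hs : s ∈ subdiff ℓ x) : |s| ≤ maxAbsSubgrad ℓ x := by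
  apply le_csSup
  · refine ⟨max (ℓ (x+1) - ℓ x) (ℓ (x-1) - ℓ x), ?_⟩
    rintro t ⟨u, hu, rfl⟩
    rcases abs_cases u with ⟨h, _⟩ | ⟨h, _⟩ <;> rw [h]
    · have := hu (x + 1); simp only [add_sub_cancel_left] at this
      exact le_max_iff.mpr (Or.inl (by linarith))
    · have := hu (x - 1)
      have h2 : x - 1 - x = -1 := by ring
      rw [h2] at this
      exact le_max_iff.mpr (Or.inr (by linarith))
  · exact mem_image_of_mem _ hs

lemma maxAbs_nonneg (hℓ : ConvexOn ℝ Set.univ ℓ) (x : ℝ) : 0 ≤ maxAbsSubgrad ℓ x := by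
  obtain ⟨s, hs⟩ := subdiff_nonempty hℓ x
  exact (abs_nonneg s).trans (abs_le_maxAbs hs)

lemma subdiff_mono {s t x y : ℝ} (hs : s ∈ subdiff ℓ x) (ht : t ∈ subdiff ℓ y) :
    0 ≤ (s - t) * (x - y) := by
  have h1 := hs y
  have h2 := ht x
  nlinarith

lemma abs_le_of_between (hℓ : ConvexOn ℝ Set.univ ℓ) {a b x s : ℝ} (hax : a ≤ x) (hxb : x ≤ b)
    (hs : s ∈ subdiff ℓ x) : |s| ≤ maxAbsSubgrad ℓ a + maxAbsSubgrad ℓ b := by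
  obtain ⟨sa, hsa⟩ := subdiff_nonempty hℓ a
  obtain ⟨sb, hsb⟩ := subdiff_nonempty hℓ b
  have hMa := maxAbs_nonneg hℓ a
  have hMb := maxAbs_nonneg hℓ b
  have h1 : s ≤ maxAbsSubgrad ℓ b := by
    rcases eq_or_lt_of_le hxb with rfl | hxb
    · exact (le_abs_self s).trans (abs_le_maxAbs hs)
    · have := subdiff_mono hs hsb
      have habs := abs_le_maxAbs hsb
      have := abs_le.mp habs
      nlinarith
  have h2 : -maxAbsSubgrad ℓ a ≤ s := by
    rcases eq_or_lt_of_le hax with rfl | hax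
    · have := abs_le.mp ((abs_le_maxAbs hs)); linarith [this.1]
    · have := subdiff_mono hs hsa
      have habs := abs_le.mp (abs_le_maxAbs hsa)
      nlinarith
  rw [abs_le]
  constructor <;> nlinarith

lemma maxAbs_between (hℓ : ConvexOn ℝ Set.univ ℓ) {a b x : ℝ} (hax : a ≤ x) (hxb : x ≤ b) :
    maxAbsSubgrad ℓ x ≤ maxAbsSubgrad ℓ a + maxAbsSubgrad ℓ b := by
  apply csSup_le ((subdiff_nonempty hℓ x).image _)
  rintro t ⟨u, hu, rfl⟩
  exact abs_le_of_between hℓ hax hxb hu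





lemma abs_le_of_sq_le_mul {x c : ℝ} (hc : 0 ≤ c) (h : x ^ 2 ≤ c * |x|) : |x| ≤ c := by
  rcases (abs_nonneg x).eq_or_lt with h0 | h0
  · rw [← h0]; exact hc
  · refine le_of_mul_le_mul_right ?_ h0
    calc |x| * |x| = x ^ 2 := by rw [← sq_abs]; ring
    _ ≤ c * |x| := h


lemma prox_min (hP : ∀ (a b : ℝ), 0 < b → ∀ v : ℝ, v ≠ P a b →
      (a - P a b) ^ 2 / (2 * b) + ℓ (P a b) < (a - v) ^ 2 / (2 * b) + ℓ v)
    {a b : ℝ} (hb : 0 < b) (v : ℝ) :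
    (a - P a b) ^ 2 / (2 * b) + ℓ (P a b) ≤ (a - v) ^ 2 / (2 * b) + ℓ v := by
  rcases eq_or_ne v (P a b) with rfl | h
  · exact le_rfl
  · exact (hP a b hb v h).le

lemma prox_subgrad (hℓ : ConvexOn ℝ Set.univ ℓ)
    (hP : ∀ (a b : ℝ), 0 < b → ∀ v : ℝ, v ≠ P a b →
      (a - P a b) ^ 2 / (2 * b) + ℓ (P a b) < (a - v) ^ 2 / (2 * b) + ℓ v)
    {a b : ℝ} (hb : 0 < b) : (a - P a b) / b ∈ subdiff ℓ (P a b) := by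
  intro y
  have hmin0 := prox_min (a := a) hP hb
  set p := P a b with hp
  refine le_of_forall_pos_le_add (fun ε hε => ?_)
  set t : ℝ := min 1 (ε * (2 * b) / ((y - p) ^ 2 + 1)) with ht
  have ht0 : 0 < t := by
    apply lt_min one_pos
    positivity
  have ht1 : t ≤ 1 := min_le_left _ _
  have hconv : ℓ (p + t * (y - p)) ≤ (1 - t) * ℓ p + t * ℓ y := by
    have := hℓ.2 (mem_univ p) (mem_univ y) (by linarith : (0:ℝ) ≤ 1 - t) ht0.le (by ring)
    simpa [smul_eq_mul, show (1 - t) * p + t * y = p + t * (y - p) by ring] using this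
  have hmin := hmin0 (p + t * (y - p))
  have key : ℓ p + (a - p) / b * (y - p) ≤ ℓ y + t * (y - p) ^ 2 / (2 * b) := by
    have e1 : (a - (p + t * (y - p))) ^ 2 / (2 * b)
        = (a - p) ^ 2 / (2 * b) - t * ((a - p) / b * (y - p)) + t * (t * (y - p) ^ 2 / (2 * b)) := by
      field_simp
      ring
    rw [e1] at hmin
    have h3 : t * (ℓ p + (a - p) / b * (y - p)) ≤ t * (ℓ y + t * (y - p) ^ 2 / (2 * b)) := by
      nlinarith [hmin, hconv]
    have := le_of_mul_le_mul_left h3 ht0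
    linarith [this]
  have hlast : t * (y - p) ^ 2 / (2 * b) ≤ ε := by
    have h2 : 0 < (y - p) ^ 2 + 1 := by positivity
    have h3 : t * ((y - p) ^ 2 + 1) ≤ ε * (2 * b) :=
      (le_div_iff₀ h2).mp (min_le_right _ _)
    rw [div_le_iff₀ (by linarith : (0:ℝ) < 2 * b)]
    nlinarith [ht0.le, hε.le]
  linarith

lemma prox_dist (hℓ : ConvexOn ℝ Set.univ ℓ)
    (hP : ∀ (a b : ℝ), 0 < b → ∀ v : ℝ, v ≠ P a b →
      (a - P a b) ^ 2 / (2 * b) + ℓ (P a b) < (a - v) ^ 2 / (2 * b) + ℓ v)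
    {a b : ℝ} (hb : 0 < b) : |a - P a b| ≤ b * maxAbsSubgrad ℓ a := by
  obtain ⟨s, hs⟩ := subdiff_nonempty hℓ a
  have hu := prox_subgrad hℓ hP (a := a) hb
  have hmono := subdiff_mono hu hs
  set p := P a b
  set M := maxAbsSubgrad ℓ a with hM
  have hM0 : 0 ≤ M := (abs_nonneg s).trans (abs_le_maxAbs hs)
  -- clear the denominator in hmono
  have h0 : 0 ≤ ((a - p) - b * s) * (p - a) := by
    have h := mul_nonneg hmono hb.le
    have e : ((a - p) / b - s) * (p - a) * b = ((a - p) - b * s) * (p - a) := by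
      field_simp
    rwa [e] at h
  have h1 : (a - p) ^ 2 ≤ b * (s * (a - p)) := by nlinarith [h0]
  have h2 : s * (a - p) ≤ M * |a - p| := by
    calc s * (a - p) ≤ |s * (a - p)| := le_abs_self _
    _ = |s| * |a - p| := abs_mul _ _
    _ ≤ M * |a - p| := mul_le_mul_of_nonneg_right (abs_le_maxAbs hs) (abs_nonneg _)
  refine abs_le_of_sq_le_mul (mul_nonneg hb.le hM0) ?_
  calc (a - p) ^ 2 ≤ b * (M * |a - p|) := le_trans h1 (by nlinarith [h2, hb.le])
  _ = b * M * |a - p| := by ring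

lemma prox_lip_a (hℓ : ConvexOn ℝ Set.univ ℓ)
    (hP : ∀ (a b : ℝ), 0 < b → ∀ v : ℝ, v ≠ P a b →
      (a - P a b) ^ 2 / (2 * b) + ℓ (P a b) < (a - v) ^ 2 / (2 * b) + ℓ v)
    {a a' b : ℝ} (hb : 0 < b) : |P a b - P a' b| ≤ |a - a'| := by
  have hu := prox_subgrad hℓ hP (a := a) hb
  have hu' := prox_subgrad hℓ hP (a := a') hb
  have hmono := subdiff_mono hu hu'
  set p := P a b; set q := P a' b
  have h0 : 0 ≤ ((a - p) - (a' - q)) * (p - q) := by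
    have h := mul_nonneg hmono hb.le
    have e : ((a - p) / b - (a' - q) / b) * (p - q) * b = ((a - p) - (a' - q)) * (p - q) := by
      field_simp
    rwa [e] at h
  refine abs_le_of_sq_le_mul (abs_nonneg _) ?_
  have h1 : (p - q) ^ 2 ≤ (a - a') * (p - q) := by nlinarith [h0]
  calc (p - q) ^ 2 ≤ (a - a') * (p - q) := h1
  _ ≤ |(a - a') * (p - q)| := le_abs_self _
  _ = |a - a'| * |p - q| := abs_mul _ _

lemma prox_lip_b (hℓ : ConvexOn ℝ Set.univ ℓ)
    (hP : ∀ (a b : ℝ), 0 < b → ∀ v : ℝ, v ≠ P a b →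
      (a - P a b) ^ 2 / (2 * b) + ℓ (P a b) < (a - v) ^ 2 / (2 * b) + ℓ v)
    {a b b' : ℝ} (hb : 0 < b) (hb' : 0 < b') :
    |P a b - P a b'| ≤ |b - b'| * maxAbsSubgrad ℓ a := by
  have hu := prox_subgrad hℓ hP (a := a) hb
  have hu' := prox_subgrad hℓ hP (a := a) hb'
  have hmono := subdiff_mono hu hu'
  have hd := prox_dist hℓ hP (a := a) hb
  set p := P a b; set q := P a b'
  set M := maxAbsSubgrad ℓ a with hM
  have hM0 : 0 ≤ M := by
    obtain ⟨s, hs⟩ := subdiff_nonempty hℓ a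
    exact (abs_nonneg s).trans (abs_le_maxAbs hs)
  have h0 : 0 ≤ ((a - p) * b' - b * (a - q)) * (p - q) := by
    have h := mul_nonneg hmono (mul_pos hb hb').le
    have e : ((a - p) / b - (a - q) / b') * (p - q) * (b * b')
        = ((a - p) * b' - b * (a - q)) * (p - q) := by
      field_simp
    rwa [e] at h
  have key : b * (p - q) ^ 2 ≤ (b' - b) * (a - p) * (p - q) := by nlinarith [h0]
  have h2 : (b' - b) * (a - p) * (p - q) ≤ |b - b'| * (b * M) * |p - q| := by
    calc (b' - b) * (a - p) * (p - q) ≤ |(b' - b) * (a - p) * (p - q)| := le_abs_self _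
    _ = |b - b'| * |a - p| * |p - q| := by rw [abs_mul, abs_mul, abs_sub_comm b' b]
    _ ≤ |b - b'| * (b * M) * |p - q| := by
        have h3 : |b - b'| * |a - p| ≤ |b - b'| * (b * M) :=
          mul_le_mul_of_nonneg_left hd (abs_nonneg _)
        exact mul_le_mul_of_nonneg_right h3 (abs_nonneg _)
  refine abs_le_of_sq_le_mul (mul_nonneg (abs_nonneg _) hM0) ?_
  have h4 : b * (p - q) ^ 2 ≤ b * (|b - b'| * M * |p - q|) := by nlinarith [key, h2, hb.le]
  exact le_of_mul_le_mul_left h4 hb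






lemma abs_sub_le'' (a b : ℝ) : |a - b| ≤ |a| + |b| := by
  simpa [sub_eq_add_neg] using abs_add_le a (-b)

/-- key algebraic identity for the Moreau envelope expansion -/
lemma moreau_alg (χ δ τ Δτ p : ℝ) (hτ : τ ≠ 0) (hτ' : τ + Δτ ≠ 0) :
    (χ + δ - p) ^ 2 / (2 * (τ + Δτ))
      = (χ - p) ^ 2 / (2 * τ) + (χ - p) / τ * δ - (χ - p) ^ 2 / (2 * τ ^ 2) * Δτ
        + ((χ - p) * Δτ / τ - δ) ^ 2 / (2 * (τ + Δτ)) := by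
  field_simp
  ring

set_option maxHeartbeats 1000000 in
/-- The fundamental quadratic error bound for the Moreau envelope. -/
lemma err_bound (hℓ : ConvexOn ℝ Set.univ ℓ)
    (hP : ∀ (a b : ℝ), 0 < b → ∀ v : ℝ, v ≠ P a b →
      (a - P a b) ^ 2 / (2 * b) + ℓ (P a b) < (a - v) ^ 2 / (2 * b) + ℓ v)
    {χ δ τ Δτ W : ℝ} (hτ : 0 < τ) (hΔτ : |Δτ| ≤ τ / 2) (hW0 : 0 ≤ W)
    (hW1 : maxAbsSubgrad ℓ χ ≤ W) (hW2 : maxAbsSubgrad ℓ (χ + δ) ≤ W) :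
    |((χ + δ - P (χ + δ) (τ + Δτ)) ^ 2 / (2 * (τ + Δτ)) + ℓ (P (χ + δ) (τ + Δτ))
      - ((χ - P χ τ) ^ 2 / (2 * τ) + ℓ (P χ τ))
      - (χ - P χ τ) / τ * δ + (χ - P χ τ) ^ 2 / (2 * τ ^ 2) * Δτ)|
      ≤ 20 / τ * (|δ| + (1 + W) * |Δτ|) ^ 2 := by
  have hΔ := abs_le.mp hΔτ
  have hτ' : 0 < τ + Δτ := by linarith
  have hττ' : τ ≤ 2 * (τ + Δτ) := by linarith
  have hδ0 := abs_nonneg δ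
  have hΔτ0 := abs_nonneg Δτ
  set S := (|δ| + (1 + W) * |Δτ|) ^ 2 with hS
  have hS0 : 0 ≤ S := sq_nonneg _
  have hD0 : 0 ≤ |δ| + W * |Δτ| := by positivity
  have hDS : (|δ| + W * |Δτ|) ^ 2 ≤ S := by
    rw [hS]
    nlinarith [abs_nonneg δ, abs_nonneg Δτ]
  -- abbreviations
  set p := P χ τ with hpdef
  set q := P (χ + δ) (τ + Δτ) with hqdef
  set r := χ - p with hrdef
  set r' := χ + δ - q with hr'def
  clear_value S p q r r'
  -- basic bounds
  have hr : |r| ≤ τ * W := by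
    rw [hrdef, hpdef]
    refine le_trans (prox_dist hℓ hP hτ) ?_
    exact mul_le_mul_of_nonneg_left hW1 hτ.le
  have hr' : |r'| ≤ (τ + Δτ) * W := by
    rw [hr'def, hqdef]
    refine le_trans (prox_dist hℓ hP hτ') ?_
    exact mul_le_mul_of_nonneg_left hW2 hτ'.le
  have hrτ : |r| / τ ≤ W := by rw [div_le_iff₀ hτ]; nlinarith
  have hr'τ : |r'| / (τ + Δτ) ≤ W := by rw [div_le_iff₀ hτ']; nlinarith
  have hqp : |q - p| ≤ |δ| + W * |Δτ| := by
    have h1 : |P (χ + δ) (τ + Δτ) - P (χ + δ) τ| ≤ |Δτ| * W := by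
      refine le_trans (prox_lip_b hℓ hP hτ' hτ) ?_
      have he : τ + Δτ - τ = Δτ := by ring
      rw [he]
      exact mul_le_mul_of_nonneg_left hW2 (abs_nonneg _)
    have h2 : |P (χ + δ) τ - P χ τ| ≤ |δ| := by
      refine le_trans (prox_lip_a hℓ hP hτ) ?_
      have he : χ + δ - χ = δ := by ring
      rw [he]
    calc |q - p| ≤ |P (χ + δ) (τ + Δτ) - P (χ + δ) τ| + |P (χ + δ) τ - P χ τ| := by
          rw [hqdef, hpdef]; exact abs_sub_le _ _ _
    _ ≤ |Δτ| * W + |δ| := add_le_add h1 h2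
    _ = |δ| + W * |Δτ| := by ring
  have hrr' : |r' - r| ≤ 2 * |δ| + W * |Δτ| := by
    have he : r' - r = δ - (q - p) := by rw [hr'def, hrdef]; ring
    rw [he]
    calc |δ - (q - p)| ≤ |δ| + |q - p| := abs_sub_le'' _ _
    _ ≤ 2 * |δ| + W * |Δτ| := by linarith
  -- UPPER BOUND
  have hupper : r' ^ 2 / (2 * (τ + Δτ)) + ℓ q
      - (r ^ 2 / (2 * τ) + ℓ p) - r / τ * δ + r ^ 2 / (2 * τ ^ 2) * Δτ
      ≤ (r * Δτ / τ - δ) ^ 2 / (2 * (τ + Δτ)) := by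
    have hmin := prox_min (ℓ := ℓ) (a := χ + δ) hP hτ' p
    rw [← hqdef, ← hr'def] at hmin
    have hid := moreau_alg χ δ τ Δτ p hτ.ne' hτ'.ne'
    rw [← hrdef] at hid
    linarith [hmin, hid]
  have hQ1 : (r * Δτ / τ - δ) ^ 2 / (2 * (τ + Δτ)) ≤ S / τ := by
    have habs : |r * Δτ / τ - δ| ≤ |δ| + (1 + W) * |Δτ| := by
      have h1 : |r * Δτ / τ| = |r| * |Δτ| / τ := by
        rw [abs_div, abs_mul, abs_of_pos hτ]
      have h2 : |r| * |Δτ| / τ ≤ W * |Δτ| := by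
        rw [div_le_iff₀ hτ]; nlinarith
      calc |r * Δτ / τ - δ| ≤ |r * Δτ / τ| + |δ| := abs_sub_le'' _ _
      _ ≤ W * |Δτ| + |δ| := by rw [h1]; linarith
      _ ≤ |δ| + (1 + W) * |Δτ| := by nlinarith
    have hnum : (r * Δτ / τ - δ) ^ 2 ≤ S := by
      rw [hS, ← sq_abs (r * Δτ / τ - δ)]
      exact pow_le_pow_left₀ (abs_nonneg _) habs 2
    exact div_le_div₀ hS0 hnum hτ hττ'
  -- LOWER BOUND
  have hlower : (r' / (τ + Δτ) - r / τ) * δ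
      - (r' ^ 2 / (2 * (τ + Δτ) ^ 2) - r ^ 2 / (2 * τ ^ 2)) * Δτ
      - (δ - r' * Δτ / (τ + Δτ)) ^ 2 / (2 * τ)
      ≤ r' ^ 2 / (2 * (τ + Δτ)) + ℓ q
        - (r ^ 2 / (2 * τ) + ℓ p) - r / τ * δ + r ^ 2 / (2 * τ ^ 2) * Δτ := by
    have hmin := prox_min (ℓ := ℓ) (a := χ) hP hτ q
    rw [← hpdef, ← hrdef] at hmin
    have hid := moreau_alg (χ + δ) (-δ) (τ + Δτ) (-Δτ) q hτ'.ne' (by simpa using hτ.ne')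
    rw [← hr'def] at hid
    have he1 : χ + δ + -δ = χ := by ring
    have he2 : τ + Δτ + -Δτ = τ := by ring
    rw [he1, he2] at hid
    have he3 : (r' * -Δτ / (τ + Δτ) - -δ) ^ 2 = (δ - r' * Δτ / (τ + Δτ)) ^ 2 := by ring
    rw [he3] at hid
    linarith [hmin, hid]
  have hA0 : |r' / (τ + Δτ) - r / τ| ≤ 4 / τ * (|δ| + W * |Δτ|) := by
    have hAid : r' / (τ + Δτ) - r / τ = (r' - r) / (τ + Δτ) + r * (-Δτ) / (τ * (τ + Δτ)) := by
      field_simp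
      ring
    have h1 : |(r' - r) / (τ + Δτ)| ≤ (2 * |δ| + W * |Δτ|) * (2 / τ) := by
      rw [abs_div, abs_of_pos hτ', div_le_iff₀ hτ']
      have h2τ : 1 ≤ 2 / τ * (τ + Δτ) := by
        have he : 2 / τ * (τ + Δτ) = 2 * (τ + Δτ) / τ := by ring
        rw [he, le_div_iff₀ hτ]
        linarith
      nlinarith [hrr', hD0, abs_nonneg (r' - r)]
    have h2 : |r * (-Δτ) / (τ * (τ + Δτ))| ≤ 2 * W * |Δτ| / τ := by
      rw [abs_div, abs_mul, abs_neg, abs_of_pos (mul_pos hτ hτ'),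
        div_le_div_iff₀ (mul_pos hτ hτ') hτ]
      have hge : 0 ≤ τ + 2 * Δτ := by linarith [hΔ.1]
      nlinarith [mul_le_mul_of_nonneg_right (mul_le_mul_of_nonneg_right hr hΔτ0) hτ.le,
        mul_nonneg (mul_nonneg (mul_nonneg hW0 hΔτ0) hτ.le) hge]
    calc |r' / (τ + Δτ) - r / τ| ≤ |(r' - r) / (τ + Δτ)| + |r * (-Δτ) / (τ * (τ + Δτ))| := by
          rw [hAid]; exact abs_add_le _ _
    _ ≤ (2 * |δ| + W * |Δτ|) * (2 / τ) + 2 * W * |Δτ| / τ := add_le_add h1 h2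
    _ = 4 / τ * (|δ| + W * |Δτ|) := by field_simp; ring
  have hB0 : |r' ^ 2 / (2 * (τ + Δτ) ^ 2) - r ^ 2 / (2 * τ ^ 2)|
      ≤ W * (4 / τ * (|δ| + W * |Δτ|)) := by
    have hBid : r' ^ 2 / (2 * (τ + Δτ) ^ 2) - r ^ 2 / (2 * τ ^ 2)
        = (r' / (τ + Δτ) - r / τ) * ((r' / (τ + Δτ) + r / τ) / 2) := by
      field_simp
      ring
    rw [hBid, abs_mul]
    have h1 : |(r' / (τ + Δτ) + r / τ) / 2| ≤ W := by
      rw [abs_div, abs_of_pos (by norm_num : (0:ℝ) < 2), div_le_iff₀ (by norm_num : (0:ℝ) < 2)]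
      have h2 : |r' / (τ + Δτ)| ≤ W := by rwa [abs_div, abs_of_pos hτ']
      have h3 : |r / τ| ≤ W := by rwa [abs_div, abs_of_pos hτ]
      calc |r' / (τ + Δτ) + r / τ| ≤ |r' / (τ + Δτ)| + |r / τ| := abs_add_le _ _
      _ ≤ W * 2 := by linarith
    calc |r' / (τ + Δτ) - r / τ| * |(r' / (τ + Δτ) + r / τ) / 2|
        ≤ (4 / τ * (|δ| + W * |Δτ|)) * W := by
          apply mul_le_mul hA0 h1 (abs_nonneg _)
          positivity
    _ = W * (4 / τ * (|δ| + W * |Δτ|)) := by ring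
  have hQ2 : (δ - r' * Δτ / (τ + Δτ)) ^ 2 / (2 * τ) ≤ (|δ| + W * |Δτ|) ^ 2 / τ := by
    have habs : |δ - r' * Δτ / (τ + Δτ)| ≤ |δ| + W * |Δτ| := by
      have h1 : |r' * Δτ / (τ + Δτ)| = |r'| / (τ + Δτ) * |Δτ| := by
        rw [abs_div, abs_mul, abs_of_pos hτ']; ring
      have h2 : |r'| / (τ + Δτ) * |Δτ| ≤ W * |Δτ| :=
        mul_le_mul_of_nonneg_right hr'τ (abs_nonneg _)
      calc |δ - r' * Δτ / (τ + Δτ)| ≤ |δ| + |r' * Δτ / (τ + Δτ)| := abs_sub_le'' _ _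
      _ ≤ |δ| + W * |Δτ| := by rw [h1]; linarith
    have hnum : (δ - r' * Δτ / (τ + Δτ)) ^ 2 ≤ (|δ| + W * |Δτ|) ^ 2 := by
      rw [← sq_abs (δ - r' * Δτ / (τ + Δτ))]
      exact pow_le_pow_left₀ (abs_nonneg _) habs 2
    exact div_le_div₀ (by positivity) hnum hτ (by linarith)
  -- combine
  have hinv : (0:ℝ) < τ⁻¹ := inv_pos.mpr hτ
  have haux1 : 0 ≤ τ⁻¹ * (S - (|δ| + W * |Δτ|) ^ 2) :=
    mul_nonneg hinv.le (by linarith)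
  have haux2 : 0 ≤ τ⁻¹ * S := mul_nonneg hinv.le hS0
  -- lower pieces
  have hx1 : -(4 / τ * (|δ| + W * |Δτ|) * (|δ| + W * |Δτ|)) ≤ (r' / (τ + Δτ) - r / τ) * δ := by
    have h1 : |(r' / (τ + Δτ) - r / τ) * δ| ≤ 4 / τ * (|δ| + W * |Δτ|) * (|δ| + W * |Δτ|) := by
      rw [abs_mul]
      apply mul_le_mul hA0 (by nlinarith [mul_nonneg hW0 (abs_nonneg Δτ)] : |δ| ≤ |δ| + W * |Δτ|) (abs_nonneg _)
      positivity
    linarith [neg_abs_le ((r' / (τ + Δτ) - r / τ) * δ)]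
  have hx2 : -(4 / τ * (|δ| + W * |Δτ|) * (|δ| + W * |Δτ|))
      ≤ -((r' ^ 2 / (2 * (τ + Δτ) ^ 2) - r ^ 2 / (2 * τ ^ 2)) * Δτ) := by
    have h1 : |(r' ^ 2 / (2 * (τ + Δτ) ^ 2) - r ^ 2 / (2 * τ ^ 2)) * Δτ|
        ≤ 4 / τ * (|δ| + W * |Δτ|) * (|δ| + W * |Δτ|) := by
      rw [abs_mul]
      calc |r' ^ 2 / (2 * (τ + Δτ) ^ 2) - r ^ 2 / (2 * τ ^ 2)| * |Δτ|
          ≤ (W * (4 / τ * (|δ| + W * |Δτ|))) * |Δτ| :=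
            mul_le_mul_of_nonneg_right hB0 (abs_nonneg _)
      _ = (4 / τ * (|δ| + W * |Δτ|)) * (W * |Δτ|) := by ring
      _ ≤ 4 / τ * (|δ| + W * |Δτ|) * (|δ| + W * |Δτ|) := by
          apply mul_le_mul_of_nonneg_left (by linarith [abs_nonneg δ])
          positivity
    linarith [le_abs_self ((r' ^ 2 / (2 * (τ + Δτ) ^ 2) - r ^ 2 / (2 * τ ^ 2)) * Δτ)]
  rw [abs_le]
  constructor
  · -- lower
    have : -(20 / τ * S) ≤ (r' / (τ + Δτ) - r / τ) * δ
        - (r' ^ 2 / (2 * (τ + Δτ) ^ 2) - r ^ 2 / (2 * τ ^ 2)) * Δτ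
        - (δ - r' * Δτ / (τ + Δτ)) ^ 2 / (2 * τ) := by
      have e1 : 4 / τ * (|δ| + W * |Δτ|) * (|δ| + W * |Δτ|) = 4 * τ⁻¹ * (|δ| + W * |Δτ|) ^ 2 := by
        rw [div_eq_mul_inv]; ring
      have e2 : (|δ| + W * |Δτ|) ^ 2 / τ = τ⁻¹ * (|δ| + W * |Δτ|) ^ 2 := by
        rw [div_eq_mul_inv]; ring
      have e3 : 20 / τ * S = 20 * (τ⁻¹ * S) := by rw [div_eq_mul_inv]; ring
      rw [e3]
      rw [e1] at hx1 hx2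
      rw [e2] at hQ2
      linarith [hQ2, hx1, hx2, haux1, haux2]
    linarith [hlower, this]
  · -- upper
    have e4 : S / τ = τ⁻¹ * S := by rw [div_eq_mul_inv]; ring
    rw [e4] at hQ1
    have e3 : 20 / τ * S = 20 * (τ⁻¹ * S) := by rw [div_eq_mul_inv]; ring
    rw [e3]
    linarith [hupper, hQ1, haux2]






/-- `|e(χ;τ) − ℓ(χ)| ≤ τ·M(χ)²` -/
lemma env_sub_bound (hℓ : ConvexOn ℝ Set.univ ℓ)
    (hP : ∀ (a b : ℝ), 0 < b → ∀ v : ℝ, v ≠ P a b →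
      (a - P a b) ^ 2 / (2 * b) + ℓ (P a b) < (a - v) ^ 2 / (2 * b) + ℓ v)
    {τ : ℝ} (hτ : 0 < τ) (χ : ℝ) :
    |(χ - P χ τ) ^ 2 / (2 * τ) + ℓ (P χ τ) - ℓ χ| ≤ τ * (maxAbsSubgrad ℓ χ) ^ 2 := by
  obtain ⟨s, hs⟩ := subdiff_nonempty hℓ χ
  have hM := abs_le_maxAbs hs
  have hM0 := maxAbs_nonneg hℓ χ
  have hs' := abs_le.mp hM
  set M := maxAbsSubgrad ℓ χ
  set p := P χ τ with hpdef
  have hup : (χ - p) ^ 2 / (2 * τ) + ℓ p - ℓ χ ≤ 0 := by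
    have := prox_min (ℓ := ℓ) (a := χ) hP hτ χ
    rw [← hpdef] at this
    simp only [sub_self] at this
    norm_num at this
    linarith [this, hτ]
  have hdist : |χ - p| ≤ τ * M := prox_dist hℓ hP hτ
  have hdist' := abs_le.mp hdist
  have hlow : -(τ * M ^ 2) ≤ (χ - p) ^ 2 / (2 * τ) + ℓ p - ℓ χ := by
    have hsub := hs p  -- ℓ χ + s * (p - χ) ≤ ℓ p
    have hsq : 0 ≤ (χ - p) ^ 2 / (2 * τ) := by positivity
    -- s * (p - χ) ≥ -|s| * |χ - p| ≥ -M * (τ*M)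
    have h1 : -(M * (τ * M)) ≤ s * (p - χ) := by
      have := neg_abs_le (s * (p - χ))
      have habs : |s * (p - χ)| ≤ M * (τ * M) := by
        rw [abs_mul, abs_sub_comm p χ]
        apply mul_le_mul hM hdist (abs_nonneg _) hM0
      linarith
    nlinarith [hsub, h1, hsq]
  rw [abs_le]
  constructor <;> nlinarith [hup, hlow]

lemma ell_diff_bound (hℓ : ConvexOn ℝ Set.univ ℓ) (x y : ℝ) :
    |ℓ x - ℓ y| ≤ |x - y| * (maxAbsSubgrad ℓ x + maxAbsSubgrad ℓ y) := by
  obtain ⟨s, hs⟩ := subdiff_nonempty hℓ x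
  obtain ⟨t, ht⟩ := subdiff_nonempty hℓ y
  have hMx := abs_le_maxAbs hs
  have hMy := abs_le_maxAbs ht
  have hMx0 := maxAbs_nonneg hℓ x
  have hMy0 := maxAbs_nonneg hℓ y
  have h1 : ℓ x - ℓ y ≤ |x - y| * maxAbsSubgrad ℓ x := by
    have := hs y  -- ℓ x + s (y - x) ≤ ℓ y
    have h2 : -(s * (y - x)) ≤ |x - y| * maxAbsSubgrad ℓ x := by
      have : |s * (y - x)| ≤ maxAbsSubgrad ℓ x * |x - y| := by
        rw [abs_mul, abs_sub_comm y x]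
        exact mul_le_mul_of_nonneg_right hMx (abs_nonneg _)
      nlinarith [neg_abs_le (s * (y - x)), this]
    linarith
  have h2 : ℓ y - ℓ x ≤ |x - y| * maxAbsSubgrad ℓ y := by
    have := ht x
    have h3 : -(t * (x - y)) ≤ |x - y| * maxAbsSubgrad ℓ y := by
      have : |t * (x - y)| ≤ maxAbsSubgrad ℓ y * |x - y| := by
        rw [abs_mul]
        exact mul_le_mul_of_nonneg_right hMy (abs_nonneg _)
      nlinarith [neg_abs_le (t * (x - y)), this]
    linarith
  rw [abs_le]
  constructor <;> nlinarith [abs_nonneg (x - y)]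

lemma P_continuous (hℓ : ConvexOn ℝ Set.univ ℓ)
    (hP : ∀ (a b : ℝ), 0 < b → ∀ v : ℝ, v ≠ P a b →
      (a - P a b) ^ 2 / (2 * b) + ℓ (P a b) < (a - v) ^ 2 / (2 * b) + ℓ v)
    {τ : ℝ} (hτ : 0 < τ) : Continuous (fun χ => P χ τ) := by
  have : LipschitzWith 1 (fun χ => P χ τ) := by
    apply LipschitzWith.of_dist_le_mul
    intro x y
    rw [Real.dist_eq, Real.dist_eq, NNReal.coe_one, one_mul]
    exact prox_lip_a hℓ hP hτ
  exact this.continuous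

lemma ell_continuous (hℓ : ConvexOn ℝ Set.univ ℓ) : Continuous ℓ := by
  rw [← continuousOn_univ]
  exact hℓ.continuousOn isOpen_univ

lemma e_continuous (hℓ : ConvexOn ℝ Set.univ ℓ)
    (hP : ∀ (a b : ℝ), 0 < b → ∀ v : ℝ, v ≠ P a b →
      (a - P a b) ^ 2 / (2 * b) + ℓ (P a b) < (a - v) ^ 2 / (2 * b) + ℓ v)
    {τ : ℝ} (hτ : 0 < τ) :
    Continuous (fun χ => (χ - P χ τ) ^ 2 / (2 * τ) + ℓ (P χ τ)) := by
  have hp := P_continuous hℓ hP hτ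
  exact (((continuous_id.sub hp).pow 2).div_const _).add ((ell_continuous hℓ).comp hp)


end Aux

set_option linter.unusedSectionVars false

section Main
variable {Ω : Type*} [MeasurableSpace Ω] {μ : Measure Ω} [IsProbabilityMeasure μ]
  {G Z : Ω → ℝ} {ℓ : ℝ → ℝ} {P : ℝ → ℝ → ℝ}

lemma M_aesm (hℓ : ConvexOn ℝ Set.univ ℓ)
    (hA : ∀ c : ℝ, Integrable (fun ω => (maxAbsSubgrad ℓ (c * G ω + Z ω)) ^ 2) μ) (c : ℝ) :
    AEStronglyMeasurable (fun ω => maxAbsSubgrad ℓ (c * G ω + Z ω)) μ := by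
  have h2 := (hA c).aestronglyMeasurable
  have h3 : (fun ω => Real.sqrt ((maxAbsSubgrad ℓ (c * G ω + Z ω)) ^ 2))
      = fun ω => maxAbsSubgrad ℓ (c * G ω + Z ω) := by
    funext ω
    rw [Real.sqrt_sq (maxAbs_nonneg hℓ _)]
  rw [← h3]
  exact Real.continuous_sqrt.comp_aestronglyMeasurable h2

lemma G2_integrable (hGmeas : Measurable G) (hGauss : Measure.map G μ = gaussianReal 0 1) :
    Integrable (fun ω => G ω ^ 2) μ := by
  have h1 : Integrable (fun x : ℝ => x ^ 2) (Measure.map G μ) := hGauss ▸ gauss_sq_integrable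
  rw [integrable_map_measure (continuous_pow 2).aestronglyMeasurable hGmeas.aemeasurable] at h1
  exact h1

lemma MG_integrable (hℓ : ConvexOn ℝ Set.univ ℓ) (hGmeas : Measurable G)
    (hGauss : Measure.map G μ = gaussianReal 0 1)
    (hA : ∀ c : ℝ, Integrable (fun ω => (maxAbsSubgrad ℓ (c * G ω + Z ω)) ^ 2) μ) (c : ℝ) :
    Integrable (fun ω => maxAbsSubgrad ℓ (c * G ω + Z ω) * |G ω|) μ := by
  apply Integrable.mono'
    (g := fun ω => ((maxAbsSubgrad ℓ (c * G ω + Z ω)) ^ 2 + G ω ^ 2) / 2)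
  · exact ((hA c).add (G2_integrable hGmeas hGauss)).div_const 2
  · exact (M_aesm hℓ hA c).mul (hGmeas.abs.aestronglyMeasurable)
  · refine Filter.Eventually.of_forall fun ω => ?_
    rw [Real.norm_eq_abs]
    have h1 : 0 ≤ maxAbsSubgrad ℓ (c * G ω + Z ω) := maxAbs_nonneg hℓ _
    have h2 : 0 ≤ |G ω| := abs_nonneg _
    rw [abs_of_nonneg (mul_nonneg h1 h2)]
    nlinarith [sq_nonneg (maxAbsSubgrad ℓ (c * G ω + Z ω) - |G ω|), sq_abs (G ω)]

lemma integrand_integrable (hℓ : ConvexOn ℝ Set.univ ℓ)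
    (hP : ∀ (a b : ℝ), 0 < b → ∀ v : ℝ, v ≠ P a b →
      (a - P a b) ^ 2 / (2 * b) + ℓ (P a b) < (a - v) ^ 2 / (2 * b) + ℓ v)
    (hGmeas : Measurable G) (hZmeas : Measurable Z)
    (hGauss : Measure.map G μ = gaussianReal 0 1)
    (hA : ∀ c : ℝ, Integrable (fun ω => (maxAbsSubgrad ℓ (c * G ω + Z ω)) ^ 2) μ)
    (α τ : ℝ) (hτ : 0 < τ) :
    Integrable (fun ω => (α * G ω + Z ω - P (α * G ω + Z ω) τ) ^ 2 / (2 * τ)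
      + ℓ (P (α * G ω + Z ω) τ) - ℓ (Z ω)) μ := by
  have hχm : Measurable fun ω => α * G ω + Z ω := (hGmeas.const_mul α).add hZmeas
  apply Integrable.mono'
    (g := fun ω => τ * (maxAbsSubgrad ℓ (α * G ω + Z ω)) ^ 2
      + |α| * (maxAbsSubgrad ℓ (α * G ω + Z ω) * |G ω|)
      + |α| * (maxAbsSubgrad ℓ (0 * G ω + Z ω) * |G ω|))
  · exact (((hA α).const_mul τ).add ((MG_integrable hℓ hGmeas hGauss hA α).const_mul |α|)).add
      ((MG_integrable hℓ hGmeas hGauss hA 0).const_mul |α|)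
  · exact (((e_continuous hℓ hP hτ).measurable.comp hχm).sub
      ((ell_continuous hℓ).measurable.comp hZmeas)).aestronglyMeasurable
  · refine Filter.Eventually.of_forall fun ω => ?_
    rw [Real.norm_eq_abs]
    set χ := α * G ω + Z ω with hχ
    have h1 : |(χ - P χ τ) ^ 2 / (2 * τ) + ℓ (P χ τ) - ℓ χ| ≤ τ * (maxAbsSubgrad ℓ χ) ^ 2 :=
      env_sub_bound hℓ hP hτ χ
    have h2 : |ℓ χ - ℓ (Z ω)| ≤ |χ - Z ω| * (maxAbsSubgrad ℓ χ + maxAbsSubgrad ℓ (Z ω)) :=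
      ell_diff_bound hℓ χ (Z ω)
    have h3 : |χ - Z ω| = |α| * |G ω| := by
      rw [hχ, show α * G ω + Z ω - Z ω = α * G ω by ring, abs_mul]
    have h4 : 0 * G ω + Z ω = Z ω := by ring
    rw [h4]
    calc |(χ - P χ τ) ^ 2 / (2 * τ) + ℓ (P χ τ) - ℓ (Z ω)|
        ≤ |(χ - P χ τ) ^ 2 / (2 * τ) + ℓ (P χ τ) - ℓ χ| + |ℓ χ - ℓ (Z ω)| := by
          have := abs_sub_le ((χ - P χ τ) ^ 2 / (2 * τ) + ℓ (P χ τ)) (ℓ χ) (ℓ (Z ω))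
          exact this
    _ ≤ τ * (maxAbsSubgrad ℓ χ) ^ 2
        + |α| * |G ω| * (maxAbsSubgrad ℓ χ + maxAbsSubgrad ℓ (Z ω)) := by
          rw [h3] at h2; linarith
    _ = τ * (maxAbsSubgrad ℓ χ) ^ 2 + |α| * (maxAbsSubgrad ℓ χ * |G ω|)
        + |α| * (maxAbsSubgrad ℓ (Z ω) * |G ω|) := by ring

lemma deriv_a_integrable (hℓ : ConvexOn ℝ Set.univ ℓ)
    (hP : ∀ (a b : ℝ), 0 < b → ∀ v : ℝ, v ≠ P a b →
      (a - P a b) ^ 2 / (2 * b) + ℓ (P a b) < (a - v) ^ 2 / (2 * b) + ℓ v)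
    (hGmeas : Measurable G) (hZmeas : Measurable Z)
    (hGauss : Measure.map G μ = gaussianReal 0 1)
    (hA : ∀ c : ℝ, Integrable (fun ω => (maxAbsSubgrad ℓ (c * G ω + Z ω)) ^ 2) μ)
    (α τ : ℝ) (hτ : 0 < τ) :
    Integrable (fun ω => (α * G ω + Z ω - P (α * G ω + Z ω) τ) * G ω / τ) μ := by
  have hχm : Measurable fun ω => α * G ω + Z ω := (hGmeas.const_mul α).add hZmeas
  apply Integrable.mono' (g := fun ω => maxAbsSubgrad ℓ (α * G ω + Z ω) * |G ω|)
  · exact MG_integrable hℓ hGmeas hGauss hA α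
  · exact (((hχm.sub ((P_continuous hℓ hP hτ).measurable.comp hχm)).mul hGmeas).div_const
      τ).aestronglyMeasurable
  · refine Filter.Eventually.of_forall fun ω => ?_
    rw [Real.norm_eq_abs]
    set χ := α * G ω + Z ω
    have h1 : |χ - P χ τ| ≤ τ * maxAbsSubgrad ℓ χ := prox_dist hℓ hP hτ
    have h2 : |(χ - P χ τ) * G ω / τ| = |χ - P χ τ| * |G ω| / τ := by
      rw [abs_div, abs_mul, abs_of_pos hτ]
    rw [h2, div_le_iff₀ hτ]
    nlinarith [abs_nonneg (G ω), maxAbs_nonneg hℓ χ, abs_nonneg (χ - P χ τ)]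

lemma deriv_t_integrable (hℓ : ConvexOn ℝ Set.univ ℓ)
    (hP : ∀ (a b : ℝ), 0 < b → ∀ v : ℝ, v ≠ P a b →
      (a - P a b) ^ 2 / (2 * b) + ℓ (P a b) < (a - v) ^ 2 / (2 * b) + ℓ v)
    (hGmeas : Measurable G) (hZmeas : Measurable Z)
    (hA : ∀ c : ℝ, Integrable (fun ω => (maxAbsSubgrad ℓ (c * G ω + Z ω)) ^ 2) μ)
    (α τ : ℝ) (hτ : 0 < τ) :
    Integrable (fun ω => (α * G ω + Z ω - P (α * G ω + Z ω) τ) ^ 2) μ := by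
  have hχm : Measurable fun ω => α * G ω + Z ω := (hGmeas.const_mul α).add hZmeas
  apply Integrable.mono' (g := fun ω => τ ^ 2 * (maxAbsSubgrad ℓ (α * G ω + Z ω)) ^ 2)
  · exact (hA α).const_mul _
  · exact ((hχm.sub ((P_continuous hℓ hP hτ).measurable.comp hχm)).pow_const
      2).aestronglyMeasurable
  · refine Filter.Eventually.of_forall fun ω => ?_
    rw [Real.norm_eq_abs]
    set χ := α * G ω + Z ω
    have h1 : |χ - P χ τ| ≤ τ * maxAbsSubgrad ℓ χ := prox_dist hℓ hP hτ
    rw [abs_of_nonneg (sq_nonneg _), ← sq_abs]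
    nlinarith [abs_nonneg (χ - P χ τ), maxAbs_nonneg hℓ χ]

set_option maxHeartbeats 2000000 in
lemma main_fderiv (hℓ : ConvexOn ℝ Set.univ ℓ)
    (hP : ∀ (a b : ℝ), 0 < b → ∀ v : ℝ, v ≠ P a b →
      (a - P a b) ^ 2 / (2 * b) + ℓ (P a b) < (a - v) ^ 2 / (2 * b) + ℓ v)
    (hGmeas : Measurable G) (hZmeas : Measurable Z)
    (hGauss : Measure.map G μ = gaussianReal 0 1)
    (hA : ∀ c : ℝ, Integrable (fun ω => (maxAbsSubgrad ℓ (c * G ω + Z ω)) ^ 2) μ)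
    (L : ℝ → ℝ → ℝ)
    (hL : ∀ α τ : ℝ, L α τ = ∫ ω, ((α * G ω + Z ω - P (α * G ω + Z ω) τ) ^ 2 / (2 * τ)
      + ℓ (P (α * G ω + Z ω) τ) - ℓ (Z ω)) ∂μ)
    (α τ : ℝ) (hτ : 0 < τ) :
    HasFDerivAt (fun p : ℝ × ℝ => L p.1 p.2)
      ((∫ ω, (α * G ω + Z ω - P (α * G ω + Z ω) τ) * G ω / τ ∂μ) •
          ContinuousLinearMap.fst ℝ ℝ ℝ
        + (-(∫ ω, (α * G ω + Z ω - P (α * G ω + Z ω) τ) ^ 2 ∂μ) / (2 * τ ^ 2)) •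
          ContinuousLinearMap.snd ℝ ℝ ℝ) (α, τ) := by
  have hτ20 : (0:ℝ) < 20 / τ := div_pos (by norm_num) hτ
  -- the dominating weight
  set W : Ω → ℝ := fun ω => maxAbsSubgrad ℓ ((α - 1) * G ω + Z ω)
      + maxAbsSubgrad ℓ ((α + 1) * G ω + Z ω) with hW
  have hW0 : ∀ ω, 0 ≤ W ω := fun ω => add_nonneg (maxAbs_nonneg hℓ _) (maxAbs_nonneg hℓ _)
  have hWb : ∀ (β : ℝ), |β - α| ≤ 1 → ∀ ω, maxAbsSubgrad ℓ (β * G ω + Z ω) ≤ W ω := by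
    intro β hβ ω
    have hβ' := abs_le.mp hβ
    rcases le_total 0 (G ω) with hg | hg
    · exact maxAbs_between hℓ (by nlinarith [hβ'.1]) (by nlinarith [hβ'.2])
    · have h2 := maxAbs_between hℓ (a := (α + 1) * G ω + Z ω) (b := (α - 1) * G ω + Z ω)
        (x := β * G ω + Z ω) (by nlinarith [hβ'.2]) (by nlinarith [hβ'.1])
      have hWω : W ω = maxAbsSubgrad ℓ ((α - 1) * G ω + Z ω)
          + maxAbsSubgrad ℓ ((α + 1) * G ω + Z ω) := rfl
      rw [hWω]
      linarith [h2]
  set K : Ω → ℝ := fun ω => 20 / τ * (|G ω| + (1 + W ω)) ^ 2 with hK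
  have hWaesm : AEStronglyMeasurable W μ := (M_aesm hℓ hA (α - 1)).add (M_aesm hℓ hA (α + 1))
  have hKaesm : AEStronglyMeasurable K μ := by
    have h2 : AEStronglyMeasurable (fun ω => |G ω| + (1 + W ω)) μ :=
      (hGmeas.abs.aestronglyMeasurable).add (aestronglyMeasurable_const.add hWaesm)
    have h3 : K = fun ω => 20 / τ * ((|G ω| + (1 + W ω)) * (|G ω| + (1 + W ω))) := by
      funext ω; rw [hK]; ring
    rw [h3]
    exact (h2.mul h2).const_mul _
  have hKint : Integrable K μ := by
    apply Integrable.mono' (g := fun ω => 20 / τ * (3 * (G ω ^ 2 + 1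
      + 2 * ((maxAbsSubgrad ℓ ((α - 1) * G ω + Z ω)) ^ 2
        + (maxAbsSubgrad ℓ ((α + 1) * G ω + Z ω)) ^ 2))))
    · exact ((((G2_integrable hGmeas hGauss).add (integrable_const 1)).add
        (((hA (α - 1)).add (hA (α + 1))).const_mul 2)).const_mul 3).const_mul (20 / τ)
    · exact hKaesm
    · refine Filter.Eventually.of_forall fun ω => ?_
      rw [Real.norm_eq_abs, hK]
      have hM1 := maxAbs_nonneg hℓ ((α - 1) * G ω + Z ω)
      have hM2 := maxAbs_nonneg hℓ ((α + 1) * G ω + Z ω)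
      have hG0 := abs_nonneg (G ω)
      have hWω : W ω = maxAbsSubgrad ℓ ((α - 1) * G ω + Z ω)
          + maxAbsSubgrad ℓ ((α + 1) * G ω + Z ω) := rfl
      rw [abs_of_nonneg (by positivity)]
      have hinner : (|G ω| + (1 + W ω)) ^ 2 ≤ 3 * (G ω ^ 2 + 1
          + 2 * ((maxAbsSubgrad ℓ ((α - 1) * G ω + Z ω)) ^ 2
            + (maxAbsSubgrad ℓ ((α + 1) * G ω + Z ω)) ^ 2)) := by
        rw [hWω]
        nlinarith [sq_abs (G ω), sq_nonneg (|G ω| - 1),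
          sq_nonneg (|G ω| - (maxAbsSubgrad ℓ ((α - 1) * G ω + Z ω)
            + maxAbsSubgrad ℓ ((α + 1) * G ω + Z ω))),
          sq_nonneg (1 - (maxAbsSubgrad ℓ ((α - 1) * G ω + Z ω)
            + maxAbsSubgrad ℓ ((α + 1) * G ω + Z ω))),
          sq_nonneg (maxAbsSubgrad ℓ ((α - 1) * G ω + Z ω)
            - maxAbsSubgrad ℓ ((α + 1) * G ω + Z ω)), hM1, hM2, hG0]
      exact mul_le_mul_of_nonneg_left hinner hτ20.le
  have hC0 : 0 ≤ ∫ ω, K ω ∂μ := by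
    apply integral_nonneg
    intro ω
    rw [hK]
    positivity
  have hf3 := deriv_a_integrable hℓ hP hGmeas hZmeas hGauss hA α τ hτ
  have hf4 := deriv_t_integrable hℓ hP hGmeas hZmeas hA α τ hτ
  -- core quadratic estimate
  have hcore : ∀ h : ℝ × ℝ, ‖h‖ ≤ min 1 (τ / 2) →
      ‖L (α + h.1) (τ + h.2) - L α τ
        - ((∫ ω, (α * G ω + Z ω - P (α * G ω + Z ω) τ) * G ω / τ ∂μ) * h.1
          + (-(∫ ω, (α * G ω + Z ω - P (α * G ω + Z ω) τ) ^ 2 ∂μ) / (2 * τ ^ 2)) * h.2)‖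
        ≤ (∫ ω, K ω ∂μ) * ‖h‖ ^ 2 := by
    intro h hh
    have hn1 : |h.1| ≤ ‖h‖ := by rw [← Real.norm_eq_abs]; exact norm_fst_le h
    have hn2 : |h.2| ≤ ‖h‖ := by rw [← Real.norm_eq_abs]; exact norm_snd_le h
    have hh1 : |h.1| ≤ 1 := le_trans hn1 (le_trans hh (min_le_left _ _))
    have hh2 : |h.2| ≤ τ / 2 := le_trans hn2 (le_trans hh (min_le_right _ _))
    have hτ2 : 0 < τ + h.2 := by have := abs_le.mp hh2; linarith
    have hf1 := integrand_integrable hℓ hP hGmeas hZmeas hGauss hA (α + h.1) (τ + h.2) hτ2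
    have hf2 := integrand_integrable hℓ hP hGmeas hZmeas hGauss hA α τ hτ
    set F : Ω → ℝ := fun ω =>
      (((α + h.1) * G ω + Z ω - P ((α + h.1) * G ω + Z ω) (τ + h.2)) ^ 2 / (2 * (τ + h.2))
          + ℓ (P ((α + h.1) * G ω + Z ω) (τ + h.2)) - ℓ (Z ω)
        - ((α * G ω + Z ω - P (α * G ω + Z ω) τ) ^ 2 / (2 * τ)
          + ℓ (P (α * G ω + Z ω) τ) - ℓ (Z ω))
        - h.1 * ((α * G ω + Z ω - P (α * G ω + Z ω) τ) * G ω / τ))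
      + h.2 / (2 * τ ^ 2) * ((α * G ω + Z ω - P (α * G ω + Z ω) τ) ^ 2) with hF
    have hFint : Integrable F μ :=
      ((hf1.sub hf2).sub (hf3.const_mul h.1)).add (hf4.const_mul (h.2 / (2 * τ ^ 2)))
    have hEq : L (α + h.1) (τ + h.2) - L α τ
        - ((∫ ω, (α * G ω + Z ω - P (α * G ω + Z ω) τ) * G ω / τ ∂μ) * h.1
          + (-(∫ ω, (α * G ω + Z ω - P (α * G ω + Z ω) τ) ^ 2 ∂μ) / (2 * τ ^ 2)) * h.2)
        = ∫ ω, F ω ∂μ := by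
      have hI3 : Integrable (fun ω => h.1 * ((α * G ω + Z ω - P (α * G ω + Z ω) τ)
          * G ω / τ)) μ := hf3.const_mul h.1
      have hI4 : Integrable (fun ω => h.2 / (2 * τ ^ 2)
          * ((α * G ω + Z ω - P (α * G ω + Z ω) τ) ^ 2)) μ :=
        hf4.const_mul (h.2 / (2 * τ ^ 2))
      have hI12 : Integrable (fun ω =>
          (((α + h.1) * G ω + Z ω - P ((α + h.1) * G ω + Z ω) (τ + h.2)) ^ 2 / (2 * (τ + h.2))
            + ℓ (P ((α + h.1) * G ω + Z ω) (τ + h.2)) - ℓ (Z ω))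
          - ((α * G ω + Z ω - P (α * G ω + Z ω) τ) ^ 2 / (2 * τ)
            + ℓ (P (α * G ω + Z ω) τ) - ℓ (Z ω))) μ := hf1.sub hf2
      have hI123 : Integrable (fun ω =>
          ((((α + h.1) * G ω + Z ω - P ((α + h.1) * G ω + Z ω) (τ + h.2)) ^ 2 / (2 * (τ + h.2))
            + ℓ (P ((α + h.1) * G ω + Z ω) (τ + h.2)) - ℓ (Z ω))
          - ((α * G ω + Z ω - P (α * G ω + Z ω) τ) ^ 2 / (2 * τ)
            + ℓ (P (α * G ω + Z ω) τ) - ℓ (Z ω)))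
          - h.1 * ((α * G ω + Z ω - P (α * G ω + Z ω) τ) * G ω / τ)) μ := hI12.sub hI3
      have hsplit : ∫ ω, F ω ∂μ =
          (∫ ω, (((α + h.1) * G ω + Z ω - P ((α + h.1) * G ω + Z ω) (τ + h.2)) ^ 2
              / (2 * (τ + h.2)) + ℓ (P ((α + h.1) * G ω + Z ω) (τ + h.2)) - ℓ (Z ω)) ∂μ)
          - (∫ ω, ((α * G ω + Z ω - P (α * G ω + Z ω) τ) ^ 2 / (2 * τ)
              + ℓ (P (α * G ω + Z ω) τ) - ℓ (Z ω)) ∂μ)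
          - h.1 * (∫ ω, (α * G ω + Z ω - P (α * G ω + Z ω) τ) * G ω / τ ∂μ)
          + h.2 / (2 * τ ^ 2) * (∫ ω, (α * G ω + Z ω - P (α * G ω + Z ω) τ) ^ 2 ∂μ) := by
        have step1 := integral_add hI123 hI4
        rw [integral_sub hI12 hI3, integral_sub hf1 hf2,
          integral_const_mul, integral_const_mul] at step1
        exact step1
      rw [hL (α + h.1) (τ + h.2), hL α τ, hsplit]
      ring
    rw [hEq]
    have hbound : ∀ ω, ‖F ω‖ ≤ K ω * ‖h‖ ^ 2 := by
      intro ω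
      rw [Real.norm_eq_abs]
      have hWχ : maxAbsSubgrad ℓ (α * G ω + Z ω) ≤ W ω := by
        refine hWb α ?_ ω
        simp
      have he1 : α * G ω + Z ω + h.1 * G ω = (α + h.1) * G ω + Z ω := by ring
      have hWχ' : maxAbsSubgrad ℓ (α * G ω + Z ω + h.1 * G ω) ≤ W ω := by
        rw [he1]
        refine hWb (α + h.1) ?_ ω
        simpa using hh1
      have herr := err_bound hℓ hP (χ := α * G ω + Z ω) (δ := h.1 * G ω) (Δτ := h.2)
        hτ hh2 (hW0 ω) hWχ hWχ'
      rw [he1] at herr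
      have hFω : F ω = ((α + h.1) * G ω + Z ω - P ((α + h.1) * G ω + Z ω) (τ + h.2)) ^ 2
            / (2 * (τ + h.2)) + ℓ (P ((α + h.1) * G ω + Z ω) (τ + h.2))
          - ((α * G ω + Z ω - P (α * G ω + Z ω) τ) ^ 2 / (2 * τ) + ℓ (P (α * G ω + Z ω) τ))
          - (α * G ω + Z ω - P (α * G ω + Z ω) τ) / τ * (h.1 * G ω)
          + (α * G ω + Z ω - P (α * G ω + Z ω) τ) ^ 2 / (2 * τ ^ 2) * h.2 := by
        rw [hF]
        ring
      rw [hFω]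
      refine le_trans herr ?_
      have hin : |h.1 * G ω| + (1 + W ω) * |h.2| ≤ (|G ω| + (1 + W ω)) * ‖h‖ := by
        rw [abs_mul]
        have e1 : |h.1| * |G ω| ≤ ‖h‖ * |G ω| := mul_le_mul_of_nonneg_right hn1 (abs_nonneg _)
        have e2 : (1 + W ω) * |h.2| ≤ (1 + W ω) * ‖h‖ :=
          mul_le_mul_of_nonneg_left hn2 (by linarith [hW0 ω])
        calc |h.1| * |G ω| + (1 + W ω) * |h.2| ≤ ‖h‖ * |G ω| + (1 + W ω) * ‖h‖ :=
              add_le_add e1 e2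
        _ = (|G ω| + (1 + W ω)) * ‖h‖ := by ring
      have hsq : (|h.1 * G ω| + (1 + W ω) * |h.2|) ^ 2 ≤ ((|G ω| + (1 + W ω)) * ‖h‖) ^ 2 := by
        apply pow_le_pow_left₀ ?_ hin 2
        have := abs_nonneg (h.1 * G ω)
        have := abs_nonneg h.2
        nlinarith [hW0 ω]
      calc 20 / τ * (|h.1 * G ω| + (1 + W ω) * |h.2|) ^ 2
          ≤ 20 / τ * ((|G ω| + (1 + W ω)) * ‖h‖) ^ 2 := mul_le_mul_of_nonneg_left hsq hτ20.le
      _ = K ω * ‖h‖ ^ 2 := by rw [hK]; ring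
    calc ‖∫ ω, F ω ∂μ‖ ≤ ∫ ω, ‖F ω‖ ∂μ := norm_integral_le_integral_norm F
    _ ≤ ∫ ω, K ω * ‖h‖ ^ 2 ∂μ :=
        integral_mono hFint.norm (hKint.mul_const _) hbound
    _ = (∫ ω, K ω ∂μ) * ‖h‖ ^ 2 := integral_mul_const _ _
  -- conclude via little-o
  rw [hasFDerivAt_iff_isLittleO_nhds_zero]
  rw [Asymptotics.isLittleO_iff]
  intro c hc
  set C := ∫ ω, K ω ∂μ with hCdef
  have hC1 : (0:ℝ) < C + 1 := by linarith
  have hr0 : 0 < min (min 1 (τ / 2)) (c / (C + 1)) :=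
    lt_min (lt_min one_pos (by linarith)) (div_pos hc hC1)
  filter_upwards [Metric.ball_mem_nhds (0 : ℝ × ℝ) hr0] with h hball
  rw [mem_ball_zero_iff] at hball
  have hsmall : ‖h‖ ≤ min 1 (τ / 2) := le_of_lt (lt_of_lt_of_le hball (min_le_left _ _))
  have hsmall2 : ‖h‖ ≤ c / (C + 1) := le_of_lt (lt_of_lt_of_le hball (min_le_right _ _))
  have hcore' := hcore h hsmall
  simp only [ContinuousLinearMap.add_apply, ContinuousLinearMap.coe_smul', Pi.smul_apply,
    ContinuousLinearMap.coe_fst', ContinuousLinearMap.coe_snd', smul_eq_mul,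
    Prod.fst_add, Prod.snd_add]
  rw [Real.norm_eq_abs] at hcore'
  have h1 : ‖h‖ * (C + 1) ≤ c := by rwa [← le_div_iff₀ hC1]
  refine le_trans hcore' ?_
  nlinarith [norm_nonneg h, h1, hC0]

end Main

/-- **Differentiability of the Expected Moreau Envelope**: under assumption (A), the
expected Moreau envelope `L(α,τ) = E[e_ℓ(αG+Z;τ) − ℓ(Z)]` is finite (the integrand is
integrable), `L` is differentiable on `ℝ × (0,∞)`, and differentiation may be exchanged
with expectation:
`∂L/∂α = E[(αG+Z − prox_ℓ(αG+Z;τ))·G/τ]` and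
`∂L/∂τ = −E[(αG+Z − prox_ℓ(αG+Z;τ))²]/(2τ²)`. -/
theorem expected_moreau_envelope_differentiable
    {Ω : Type*} [MeasurableSpace Ω] (μ : Measure Ω) [IsProbabilityMeasure μ]
    (G Z : Ω → ℝ) (hGmeas : Measurable G) (hZmeas : Measurable Z)
    (hGauss : Measure.map G μ = gaussianReal 0 1)
    (hIndep : IndepFun G Z μ)
    (ℓ : ℝ → ℝ) (hℓ : ConvexOn ℝ Set.univ ℓ)
    (P : ℝ → ℝ → ℝ)
    (hP : ∀ (a b : ℝ), 0 < b → ∀ v : ℝ, v ≠ P a b →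
      (a - P a b) ^ 2 / (2 * b) + ℓ (P a b) < (a - v) ^ 2 / (2 * b) + ℓ v)
    -- Assumption (A)
    (hA : ∀ c : ℝ, Integrable (fun ω => (maxAbsSubgrad ℓ (c * G ω + Z ω)) ^ 2) μ)
    (e : ℝ → ℝ → ℝ)
    (he : ∀ χ τ : ℝ, e χ τ = (χ - P χ τ) ^ 2 / (2 * τ) + ℓ (P χ τ))
    (L : ℝ → ℝ → ℝ)
    (hL : ∀ α τ : ℝ, L α τ = ∫ ω, (e (α * G ω + Z ω) τ - ℓ (Z ω)) ∂μ) :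
    (∀ (α τ : ℝ), 0 < τ →
      Integrable (fun ω => e (α * G ω + Z ω) τ - ℓ (Z ω)) μ) ∧
    DifferentiableOn ℝ (fun p : ℝ × ℝ => L p.1 p.2) (Set.univ ×ˢ Ioi (0 : ℝ)) ∧
    (∀ (α τ : ℝ), 0 < τ →
      HasDerivAt (fun α' => L α' τ)
        (∫ ω, (α * G ω + Z ω - P (α * G ω + Z ω) τ) * G ω / τ ∂μ) α) ∧
    (∀ (α τ : ℝ), 0 < τ →
      HasDerivAt (fun τ' => L α τ')
        (-(∫ ω, (α * G ω + Z ω - P (α * G ω + Z ω) τ) ^ 2 ∂μ) / (2 * τ ^ 2)) τ) := by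
  have hL' : ∀ α τ : ℝ, L α τ = ∫ ω, ((α * G ω + Z ω - P (α * G ω + Z ω) τ) ^ 2 / (2 * τ)
      + ℓ (P (α * G ω + Z ω) τ) - ℓ (Z ω)) ∂μ := by
    intro α τ
    rw [hL]
    congr 1
    funext ω
    rw [he]
  have hkey : ∀ (α τ : ℝ), 0 < τ → HasFDerivAt (fun p : ℝ × ℝ => L p.1 p.2)
      ((∫ ω, (α * G ω + Z ω - P (α * G ω + Z ω) τ) * G ω / τ ∂μ) •
          ContinuousLinearMap.fst ℝ ℝ ℝ
        + (-(∫ ω, (α * G ω + Z ω - P (α * G ω + Z ω) τ) ^ 2 ∂μ) / (2 * τ ^ 2)) •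
          ContinuousLinearMap.snd ℝ ℝ ℝ) (α, τ) :=
    fun α τ hτ => main_fderiv hℓ hP hGmeas hZmeas hGauss hA L hL' α τ hτ
  refine ⟨?_, ?_, ?_, ?_⟩
  · intro α τ hτ
    have h1 := integrand_integrable hℓ hP hGmeas hZmeas hGauss hA α τ hτ
    have heq : (fun ω => e (α * G ω + Z ω) τ - ℓ (Z ω))
        = fun ω => (α * G ω + Z ω - P (α * G ω + Z ω) τ) ^ 2 / (2 * τ)
          + ℓ (P (α * G ω + Z ω) τ) - ℓ (Z ω) := by
      funext ω
      rw [he]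
    rw [heq]
    exact h1
  · intro p hp
    have hτ : 0 < p.2 := hp.2
    have h1 := hkey p.1 p.2 hτ
    rw [Prod.mk.eta] at h1
    exact h1.differentiableAt.differentiableWithinAt
  · intro α τ hτ
    have hFD := hkey α τ hτ
    have hc : HasDerivAt (fun a : ℝ => ((a, τ) : ℝ × ℝ)) ((1:ℝ), (0:ℝ)) α :=
      (hasDerivAt_id α).prodMk (hasDerivAt_const α τ)
    have h2 := hFD.comp_hasDerivAt α hc
    have h3 : ((∫ ω, (α * G ω + Z ω - P (α * G ω + Z ω) τ) * G ω / τ ∂μ) •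
          ContinuousLinearMap.fst ℝ ℝ ℝ
        + (-(∫ ω, (α * G ω + Z ω - P (α * G ω + Z ω) τ) ^ 2 ∂μ) / (2 * τ ^ 2)) •
          ContinuousLinearMap.snd ℝ ℝ ℝ) ((1:ℝ), (0:ℝ))
        = ∫ ω, (α * G ω + Z ω - P (α * G ω + Z ω) τ) * G ω / τ ∂μ := by
      simp
    rw [h3] at h2
    exact h2
  · intro α τ hτ
    have hFD := hkey α τ hτ
    have hc : HasDerivAt (fun t : ℝ => ((α, t) : ℝ × ℝ)) ((0:ℝ), (1:ℝ)) τ :=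
      (hasDerivAt_const τ α).prodMk (hasDerivAt_id τ)
    have h2 := hFD.comp_hasDerivAt τ hc
    have h3 : ((∫ ω, (α * G ω + Z ω - P (α * G ω + Z ω) τ) * G ω / τ ∂μ) •
          ContinuousLinearMap.fst ℝ ℝ ℝ
        + (-(∫ ω, (α * G ω + Z ω - P (α * G ω + Z ω) τ) ^ 2 ∂μ) / (2 * τ ^ 2)) •
          ContinuousLinearMap.snd ℝ ℝ ℝ) ((0:ℝ), (1:ℝ))
        = -(∫ ω, (α * G ω + Z ω - P (α * G ω + Z ω) τ) ^ 2 ∂μ) / (2 * τ ^ 2) := by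
      simp
    rw [h3] at h2
    exact h2
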